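/- Let A = (Q_{2^{s_n}})^{i_n}(Q_{2^{s_{n−1}}})^{i_{n−1}}⋯(Q_{2^{s_1}})^{i_1} be an A-polynomial. If there exists k ∈ {2,3,…,n} with i_k = 1 and s_k ≥ s_{k−1} + 2, then ∫ A dμ = 0. -/

import Mathlib

open Polynomial MeasureTheory Filter

/-- `r γ s` : the recursively defined scales `r 0 = 1`, `r (s+1) = γ (s+1) * (r s)²`. -/
noncomputable def r (γ : ℕ → ℝ) : ℕ → ℝ
  | 0 => 1
  | s + 1 => γ (s + 1) * (r γ s) ^ 2

/-- `P γ s` : the polynomial `P_{2^s}`, with `P_1 = X - 1` and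
`P_{2^{s+1}} = P_{2^s} · (P_{2^s} + r_s)`. -/
noncomputable def P (γ : ℕ → ℝ) : ℕ → Polynomial ℝ
  | 0 => X - 1
  | s + 1 => P γ s * (P γ s + C (r γ s))

/-- The integral `∫ f dν_s` of a function `f` against the normalized counting measure `ν_s`
on the `2^s` (simple, real) zeros of `P_{2^s} + r_s/2`. -/
noncomputable def nuInt (γ : ℕ → ℝ) (s : ℕ) (f : ℝ → ℝ) : ℝ :=
  (((P γ s + C (r γ s / 2)).roots.map f).sum) / 2 ^ s

/-! `T_s = P_{2^s} + r_s/2` satisfies `T_{s+1} = T_s² - δ_s`, so the `2^u` atoms of `ν_u` split,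
level by level, into the roots of the equations `T_s = ±α`. Summed over the roots of `T_s = β`, a
polynomial of degree `< 2^s` gives a value independent of `β`; hence an odd function of `T_s` times
such a polynomial has `ν_u`-integral `0` for every `u > s`, and so `μ`-integral `0`. With the
identity function this shows `Q_{2^s} = T_s`. For the A-polynomial, the gap `s_k ≥ s_{k-1} + 2`
bounds the degree of the factors below `k` by `2^{s_k}`, while `T_{s_k}` times the factors above
`k`, each an even function of `T_{s_k}`, is odd in `T_{s_k}`. -/

noncomputable def T (γ : ℕ → ℝ) (s : ℕ) : ℝ[X] := P γ s + C (r γ s / 2)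

noncomputable def δ (γ : ℕ → ℝ) (s : ℕ) : ℝ := r γ s ^ 2 / 4 - r γ (s + 1) / 2

lemma T_zero (γ : ℕ → ℝ) : T γ 0 = X - C (1 / 2) := by
  simp only [T, P, r]
  rw [show (1 : ℝ[X]) = C (1 / 2) + C (1 / 2) by rw [← C_add]; norm_num]
  ring

lemma T_succ (γ : ℕ → ℝ) (s : ℕ) : T γ (s + 1) = T γ s ^ 2 - C (δ γ s) := by
  have hr : r γ (s + 1) / 2 = (r γ s / 2) ^ 2 - δ γ s := by simp only [δ]; ring
  have h2 : C (r γ s) = C (r γ s / 2) + C (r γ s / 2) := by rw [← C_add, add_halves]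
  simp only [T, P, hr, C_sub, C_pow, h2]
  ring

lemma monic_T_and_natDegree_T (γ : ℕ → ℝ) (s : ℕ) :
    (T γ s).Monic ∧ (T γ s).natDegree = 2 ^ s := by
  induction s with
  | zero => exact ⟨T_zero γ ▸ monic_X_sub_C _, by rw [T_zero, natDegree_X_sub_C]; rfl⟩
  | succ s ih =>
    obtain ⟨hmonic, hdeg⟩ := ih
    have hpos : 0 < (T γ s ^ 2).degree := by
      rw [degree_eq_natDegree (hmonic.pow 2).ne_zero, natDegree_pow, hdeg]
      exact_mod_cast by positivity
    refine ⟨T_succ γ s ▸ (hmonic.pow 2).sub_of_left (degree_C_le.trans_lt hpos), ?_⟩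
    rw [T_succ, natDegree_sub_C, natDegree_pow, hdeg, pow_succ, mul_comm]

lemma monic_T (γ : ℕ → ℝ) (s : ℕ) : (T γ s).Monic := (monic_T_and_natDegree_T γ s).1

lemma natDegree_T (γ : ℕ → ℝ) (s : ℕ) : (T γ s).natDegree = 2 ^ s :=
  (monic_T_and_natDegree_T γ s).2

lemma monic_T_sub_C (γ : ℕ → ℝ) (s : ℕ) (v : ℝ) : (T γ s - C v).Monic := by
  refine (monic_T γ s).sub_of_left (degree_C_le.trans_lt ?_)
  rw [degree_eq_natDegree (monic_T γ s).ne_zero, natDegree_T]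
  exact_mod_cast by positivity

noncomputable def rootSum (γ : ℕ → ℝ) (u : ℕ) (v : ℝ) (g : ℝ → ℝ) : ℝ :=
  ((T γ u - C v).roots.map g).sum

lemma nuInt_eq_rootSum (γ : ℕ → ℝ) (u : ℕ) (g : ℝ → ℝ) :
    nuInt γ u g = rootSum γ u 0 g / 2 ^ u := by
  rw [nuInt, rootSum, map_zero, sub_zero, T]

lemma rootSum_comp_mul (γ : ℕ → ℝ) (s : ℕ) (β : ℝ) (F g : ℝ → ℝ) :
    rootSum γ s β (fun x => F ((T γ s).eval x) * g x) = F β * rootSum γ s β g := by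
  unfold rootSum
  rw [← Multiset.sum_map_mul_left]
  exact congrArg _ (Multiset.map_congr rfl fun x hx => by rw [(mem_roots_sub_C'.mp hx).2])

lemma rootSum_T_mul (γ : ℕ → ℝ) (s : ℕ) (β : ℝ) (g : ℝ → ℝ) :
    rootSum γ s β (fun x => (T γ s).eval x * g x) = β * rootSum γ s β g :=
  rootSum_comp_mul γ s β id g

lemma rootSum_succ (γ : ℕ → ℝ) (u : ℕ) {v : ℝ} (hv : 0 ≤ δ γ u + v) (g : ℝ → ℝ) :
    rootSum γ (u + 1) v g
      = rootSum γ u √(δ γ u + v) g + rootSum γ u (-√(δ γ u + v)) g := by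
  set α := √(δ γ u + v)
  have hfac : T γ (u + 1) - C v = (T γ u - C α) * (T γ u - C (-α)) := by
    have hα : C α * C α = C (δ γ u) + C v := by
      rw [← C_mul, ← C_add, Real.mul_self_sqrt hv]
    rw [T_succ, C_neg]
    linear_combination hα
  rw [rootSum, hfac, roots_mul ((monic_T_sub_C γ u α).mul (monic_T_sub_C γ u (-α))).ne_zero,
    Multiset.map_add, Multiset.sum_add, rootSum, rootSum]

lemma rootSum_add (γ : ℕ → ℝ) (u : ℕ) (v : ℝ) (f g : ℝ → ℝ) :
    rootSum γ u v (fun x => f x + g x) = rootSum γ u v f + rootSum γ u v g :=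
  Multiset.sum_map_add

section RootSums

variable {γ : ℕ → ℝ} (hγ : ∀ s : ℕ, 0 < γ (s + 1) ∧ γ (s + 1) < 1 / 4)
include hγ

lemma r_pos (s : ℕ) : 0 < r γ s := by
  induction s with
  | zero => exact one_pos
  | succ s ih => exact mul_pos (hγ s).1 (pow_pos ih 2)

lemma abs_zero_le_half_r (s : ℕ) : |(0 : ℝ)| ≤ r γ s / 2 := by
  rw [abs_zero]; linarith [r_pos hγ s]

/-- `γ_{u+1} < 1/4` is what keeps `α = √(δ_u + v)` in `[-r_u/2, r_u/2]`, so that the splitting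
can be iterated. -/
lemma exists_rootSum_succ {u : ℕ} {v : ℝ} (hv : |v| ≤ r γ (u + 1) / 2) :
    ∃ α, |α| ≤ r γ u / 2 ∧
      ∀ g, rootSum γ (u + 1) v g = rootSum γ u α g + rootSum γ u (-α) g := by
  have hr : r γ (u + 1) = γ (u + 1) * r γ u ^ 2 := rfl
  obtain ⟨hv₁, hv₂⟩ := abs_le.mp hv
  have hγu := hγ u
  have hru := r_pos hγ u
  have hnonneg : 0 ≤ δ γ u + v := by
    simp only [δ]
    nlinarith [mul_nonneg (by linarith : (0 : ℝ) ≤ 1 / 4 - γ (u + 1)) (sq_nonneg (r γ u))]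
  have hle : δ γ u + v ≤ (r γ u / 2) ^ 2 := by simp only [δ]; linarith
  refine ⟨√(δ γ u + v), ?_, rootSum_succ γ u hnonneg⟩
  rw [abs_of_nonneg (Real.sqrt_nonneg _)]
  exact (Real.sqrt_le_left (by linarith)).mpr hle

lemma rootSum_eval_eq_of_natDegree_lt {u : ℕ} {p : ℝ[X]} (hp : p.natDegree < 2 ^ u) {v : ℝ}
    (hv : |v| ≤ r γ u / 2) :
    rootSum γ u v (fun x => p.eval x) = rootSum γ u 0 (fun x => p.eval x) := by
  induction u generalizing p v with
  | zero =>
    have hroots : ∀ w, T γ 0 - C w = X - C (1 / 2 + w) := fun w => by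
      rw [T_zero, C_add]; ring
    rw [eq_C_of_natDegree_eq_zero (Nat.lt_one_iff.mp hp)]
    simp only [rootSum, hroots, roots_X_sub_C, Multiset.map_singleton, Multiset.sum_singleton,
      eval_C]
  | succ u ih =>
    set q := p /ₘ T γ u
    set q' := p %ₘ T γ u
    have hq : q.natDegree < 2 ^ u := by
      rw [natDegree_divByMonic _ (monic_T γ u), natDegree_T]
      rw [pow_succ] at hp
      omega
    have hq' : q'.natDegree < 2 ^ u := by
      rw [← natDegree_T γ u]
      refine natDegree_modByMonic_lt _ (monic_T γ u) fun h => ?_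
      have h0 := natDegree_T γ u
      rw [h, natDegree_one] at h0
      exact (pow_pos two_pos u).ne h0
    have hsplit : ∀ β, |β| ≤ r γ u / 2 → rootSum γ u β (fun x => p.eval x) =
        β * rootSum γ u 0 (fun x => q.eval x) + rootSum γ u 0 (fun x => q'.eval x) := by
      intro β hβ
      have hp : (fun x => p.eval x) = fun x => (T γ u).eval x * q.eval x + q'.eval x := by
        funext x
        conv_lhs => rw [← modByMonic_add_div p (T γ u)]
        simp only [eval_add, eval_mul]
        ring
      rw [hp, rootSum_add, rootSum_T_mul, ih hq hβ, ih hq' hβ]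
    obtain ⟨α, hα, hv⟩ := exists_rootSum_succ hγ hv
    obtain ⟨α₀, hα₀, h0⟩ := exists_rootSum_succ hγ (abs_zero_le_half_r hγ (u + 1))
    rw [hv, h0, hsplit α hα, hsplit (-α) (by rwa [abs_neg]), hsplit α₀ hα₀,
      hsplit (-α₀) (by rwa [abs_neg])]
    ring

/-- The roots of `T_u = v` with `u > s` come in pairs of roots of `T_s = ±α`, on which an odd
function of `T_s` takes opposite values. -/
lemma rootSum_odd_comp_mul_eq_zero {s : ℕ} {F : ℝ → ℝ} (hF : ∀ y, F (-y) = -F y) {p : ℝ[X]}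
    (hp : p.natDegree < 2 ^ s) {u : ℕ} (hsu : s < u) {v : ℝ} (hv : |v| ≤ r γ u / 2) :
    rootSum γ u v (fun x => F ((T γ s).eval x) * p.eval x) = 0 := by
  induction u, hsu using Nat.le_induction generalizing v with
  | base =>
    obtain ⟨α, hα, hv⟩ := exists_rootSum_succ hγ hv
    rw [hv, rootSum_comp_mul, rootSum_comp_mul, hF,
      rootSum_eval_eq_of_natDegree_lt hγ hp hα,
      rootSum_eval_eq_of_natDegree_lt hγ hp (v := -α) (by rwa [abs_neg])]
    ring
  | succ u _ ih =>
    obtain ⟨α, hα, hv⟩ := exists_rootSum_succ hγ hv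
    rw [hv, ih hα, ih (by rwa [abs_neg]), add_zero]

lemma tendsto_nuInt_odd_comp_mul {s : ℕ} {F : ℝ → ℝ} (hF : ∀ y, F (-y) = -F y) {p : ℝ[X]}
    (hp : p.natDegree < 2 ^ s) :
    Tendsto (fun u => nuInt γ u (fun x => F ((T γ s).eval x) * p.eval x)) atTop (nhds 0) := by
  refine tendsto_const_nhds.congr' ?_
  filter_upwards [eventually_gt_atTop s] with u hsu
  rw [nuInt_eq_rootSum,
    rootSum_odd_comp_mul_eq_zero hγ hF hp hsu (abs_zero_le_half_r hγ u), zero_div]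

lemma integral_eq_zero_of_eval_eq_odd_comp_mul {μ : Measure ℝ}
    (hμconv : ∀ p : ℝ[X],
      Tendsto (fun s => nuInt γ s (fun x => p.eval x)) atTop (nhds (∫ x, p.eval x ∂μ)))
    {s : ℕ} {F : ℝ → ℝ} (hF : ∀ y, F (-y) = -F y) {A p : ℝ[X]} (hp : p.natDegree < 2 ^ s)
    (hA : ∀ x, A.eval x = F ((T γ s).eval x) * p.eval x) :
    ∫ x, A.eval x ∂μ = 0 := by
  refine tendsto_nhds_unique ?_ (tendsto_nuInt_odd_comp_mul hγ hF hp)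
  simpa only [hA] using hμconv A

end RootSums

lemma Polynomial.Monic.eq_of_integral_mul_eq_zero {μ : Measure ℝ}
    (hμint : ∀ p : ℝ[X], Integrable (fun x => p.eval x) μ)
    (hμpos : ∀ p : ℝ[X], p ≠ 0 → 0 < ∫ x, (p.eval x) ^ 2 ∂μ)
    {q t : ℝ[X]} (hq : q.Monic) (ht : t.Monic) (hdeg : q.natDegree = t.natDegree)
    (hqo : ∀ p : ℝ[X], p.natDegree < q.natDegree → ∫ x, q.eval x * p.eval x ∂μ = 0)
    (hto : ∀ p : ℝ[X], p.natDegree < t.natDegree → ∫ x, t.eval x * p.eval x ∂μ = 0) :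
    q = t := by
  by_contra hne
  have hsub : q - t ≠ 0 := sub_ne_zero.mpr hne
  have hlt : (q - t).natDegree < q.natDegree := by
    rw [natDegree_lt_iff_degree_lt hsub, ← degree_eq_natDegree hq.ne_zero]
    refine degree_sub_lt_left ?_ hq.ne_zero (by rw [hq.leadingCoeff, ht.leadingCoeff])
    rw [degree_eq_natDegree hq.ne_zero, degree_eq_natDegree ht.ne_zero, hdeg]
  have hsq : ∫ x, ((q - t).eval x) ^ 2 ∂μ = 0 := by
    have hsplit : (fun x => ((q - t).eval x) ^ 2) =
        fun x => (q * (q - t)).eval x - (t * (q - t)).eval x := by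
      funext x
      simp only [eval_mul, eval_sub]
      ring
    rw [hsplit, integral_sub (hμint _) (hμint _)]
    simp only [eval_mul]
    rw [hqo _ hlt, hto _ (hdeg ▸ hlt), sub_zero]
  exact (hμpos _ hsub).ne' hsq

lemma Q_two_pow_eq_T {γ : ℕ → ℝ} (hγ : ∀ s : ℕ, 0 < γ (s + 1) ∧ γ (s + 1) < 1 / 4)
    {μ : Measure ℝ}
    (hμint : ∀ p : ℝ[X], Integrable (fun x => p.eval x) μ)
    (hμpos : ∀ p : ℝ[X], p ≠ 0 → 0 < ∫ x, (p.eval x) ^ 2 ∂μ)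
    (hμconv : ∀ p : ℝ[X],
      Tendsto (fun s => nuInt γ s (fun x => p.eval x)) atTop (nhds (∫ x, p.eval x ∂μ)))
    {Q : ℕ → ℝ[X]} (hQmonic : ∀ n, (Q n).Monic) (hQdeg : ∀ n, (Q n).natDegree = n)
    (hQorth : ∀ n : ℕ, ∀ p : ℝ[X], p.degree < (n : WithBot ℕ) →
      ∫ x, (Q n).eval x * p.eval x ∂μ = 0) (s : ℕ) :
    Q (2 ^ s) = T γ s := by
  refine (hQmonic _).eq_of_integral_mul_eq_zero hμint hμpos (monic_T γ s)
    (by rw [hQdeg, natDegree_T]) (fun p hp => hQorth _ p ?_) (fun p hp => ?_)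
  · rw [hQdeg] at hp
    exact degree_le_natDegree.trans_lt (WithBot.coe_lt_coe.mpr hp)
  · rw [natDegree_T] at hp
    simpa only [eval_mul] using integral_eq_zero_of_eval_eq_odd_comp_mul hγ hμconv
      (F := id) (fun _ => rfl) (A := T γ s * p) hp fun x => eval_mul

noncomputable def iterSqSub (γ : ℕ → ℝ) (s : ℕ) : ℕ → ℝ → ℝ
  | 0 => id
  | t + 1 => fun y => iterSqSub γ s t y ^ 2 - δ γ (s + t)

lemma eval_T_eq_iterSqSub (γ : ℕ → ℝ) {s t : ℕ} (h : s ≤ t) (x : ℝ) :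
    (T γ t).eval x = iterSqSub γ s (t - s) ((T γ s).eval x) := by
  obtain ⟨d, rfl⟩ := Nat.exists_eq_add_of_le h
  rw [Nat.add_sub_cancel_left]
  clear h
  induction d with
  | zero => rfl
  | succ d ih => rw [← add_assoc, T_succ, eval_sub, eval_pow, eval_C, ih]; rfl

lemma iterSqSub_neg (γ : ℕ → ℝ) (s : ℕ) {t : ℕ} (ht : 0 < t) (y : ℝ) :
    iterSqSub γ s t (-y) = iterSqSub γ s t y := by
  have hsq : ∀ t, iterSqSub γ s t (-y) ^ 2 = iterSqSub γ s t y ^ 2 := by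
    intro t
    induction t with
    | zero => exact neg_sq y
    | succ t ih => simp only [iterSqSub, ih]
  obtain ⟨t, rfl⟩ := Nat.exists_eq_add_of_lt ht
  simp only [iterSqSub, hsq]

lemma natDegree_prod_pow_lt {R : Type*} [CommSemiring R] (P : ℕ → R[X])
    (hP : ∀ t, (P t).natDegree = 2 ^ t) {S : Finset ℕ} {f e : ℕ → ℕ} {N : ℕ}
    (hf : Set.InjOn f S) (hfN : ∀ j ∈ S, f j < N) (he : ∀ j ∈ S, e j ≤ 2) :
    (∏ j ∈ S, P (f j) ^ e j).natDegree < 2 ^ (N + 1) :=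
  calc (∏ j ∈ S, P (f j) ^ e j).natDegree
      ≤ ∑ j ∈ S, (P (f j) ^ e j).natDegree := natDegree_prod_le _ _
    _ ≤ ∑ j ∈ S, 2 * 2 ^ f j := Finset.sum_le_sum fun j hj =>
        natDegree_pow_le.trans (by rw [hP]; exact Nat.mul_le_mul_right _ (he j hj))
    _ = 2 * ∑ t ∈ S.image f, 2 ^ t := by rw [Finset.sum_image hf, Finset.mul_sum]
    _ < 2 * 2 ^ N := by
        gcongr
        exact Nat.geomSum_lt le_rfl (by simpa using hfN)
    _ = 2 ^ (N + 1) := by ring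

section APolynomial

variable (γ : ℕ → ℝ) {sf idx : ℕ → ℕ} {n k : ℕ} (hmono : StrictMonoOn sf (Set.Icc 1 n))
include hmono

lemma natDegree_prod_T_lt (hidx : ∀ j, 1 ≤ j → j ≤ n → idx j = 1 ∨ idx j = 2) (hk : k ≤ n)
    (hgap : sf (k - 1) + 2 ≤ sf k) :
    (∏ j ∈ Finset.Ico 1 k, T γ (sf j) ^ idx j).natDegree < 2 ^ sf k := by
  refine (natDegree_prod_pow_lt (T γ) (natDegree_T γ) (N := sf (k - 1) + 1) ?_ ?_ ?_).trans_le
    (Nat.pow_le_pow_right two_pos hgap)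
  · refine hmono.injOn.mono fun j hj => ?_
    simp only [Finset.coe_Ico, Set.mem_Ico, Set.mem_Icc] at hj ⊢
    omega
  · intro j hj
    simp only [Finset.mem_Ico] at hj
    exact Nat.lt_succ_of_le (hmono.monotoneOn ⟨hj.1, by omega⟩ ⟨by omega, by omega⟩ (by omega))
  · intro j hj
    simp only [Finset.mem_Ico] at hj
    rcases hidx j hj.1 (by omega) with h | h <;> omega

/-- Each `T_{sf j}` with `sf j > sf k` is an even function of `T_{sf k}`. -/
lemma exists_odd_prod_eval_T (hk₁ : 1 ≤ k) (hk₂ : k ≤ n) (hone : idx k = 1) :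
    ∃ F : ℝ → ℝ, (∀ y, F (-y) = -F y) ∧ ∀ x,
      ∏ j ∈ Finset.Icc 1 n, (T γ (sf j)).eval x ^ idx j =
        F ((T γ (sf k)).eval x) * ∏ j ∈ Finset.Ico 1 k, (T γ (sf j)).eval x ^ idx j := by
  have hlt : ∀ j ∈ Finset.Ico (k + 1) (n + 1), sf k < sf j := fun j hj => by
    simp only [Finset.mem_Ico] at hj
    exact hmono ⟨hk₁, hk₂⟩ ⟨by omega, by omega⟩ (by omega)
  refine ⟨fun y => y * ∏ j ∈ Finset.Ico (k + 1) (n + 1), iterSqSub γ (sf k) (sf j - sf k) y ^ idx j,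
    fun y => ?_, fun x => ?_⟩
  · simp only [neg_mul]
    congr 2
    exact Finset.prod_congr rfl fun j hj => by
      rw [iterSqSub_neg γ _ (Nat.sub_pos_of_lt (hlt j hj))]
  · have hhigh : ∏ j ∈ Finset.Ico (k + 1) (n + 1), (T γ (sf j)).eval x ^ idx j =
        ∏ j ∈ Finset.Ico (k + 1) (n + 1),
          iterSqSub γ (sf k) (sf j - sf k) ((T γ (sf k)).eval x) ^ idx j :=
      Finset.prod_congr rfl fun j hj => by rw [eval_T_eq_iterSqSub γ (hlt j hj).le]
    rw [← Finset.Ico_add_one_right_eq_Icc, ← Finset.prod_Ico_consecutive _ hk₁ (by omega),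
      Finset.prod_eq_prod_Ico_succ_bot (show k < n + 1 by omega), hone, pow_one, hhigh]
    ring

end APolynomial

theorem stmt_9_general (γ : ℕ → ℝ) (hγ : ∀ s : ℕ, 0 < γ (s + 1) ∧ γ (s + 1) < 1 / 4)
    (μ : Measure ℝ)
    (hμint : ∀ p : Polynomial ℝ, Integrable (fun x => p.eval x) μ)
    (hμpos : ∀ p : Polynomial ℝ, p ≠ 0 → 0 < ∫ x, (p.eval x) ^ 2 ∂μ)
    (hμconv : ∀ p : Polynomial ℝ,
      Tendsto (fun s => nuInt γ s (fun x => p.eval x)) atTop (nhds (∫ x, p.eval x ∂μ)))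
    (Q : ℕ → Polynomial ℝ) (hQmonic : ∀ n, (Q n).Monic) (hQdeg : ∀ n, (Q n).natDegree = n)
    (hQorth : ∀ n : ℕ, ∀ p : Polynomial ℝ, p.degree < (n : WithBot ℕ) →
      ∫ x, (Q n).eval x * p.eval x ∂μ = 0)
    (n : ℕ) (sf idx : ℕ → ℕ)
    (hsmono : ∀ k, 1 ≤ k → k < n → sf k < sf (k + 1))
    (hidx : ∀ k, 1 ≤ k → k ≤ n → idx k = 1 ∨ idx k = 2)
    (k : ℕ) (hk1 : 2 ≤ k) (hk2 : k ≤ n) (hone : idx k = 1)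
    (hgap : sf (k - 1) + 2 ≤ sf k) :
    ∫ x, ∏ j ∈ Finset.Icc 1 n, ((Q (2 ^ sf j)).eval x) ^ idx j ∂μ = 0 := by
  have hmono : StrictMonoOn sf (Set.Icc 1 n) :=
    strictMonoOn_of_lt_add_one Set.ordConnected_Icc fun a _ ha ha' =>
      hsmono a ha.1 (Nat.lt_of_succ_le ha'.2)
  simp only [Q_two_pow_eq_T hγ hμint hμpos hμconv hQmonic hQdeg hQorth]
  obtain ⟨F, hF, hfac⟩ := exists_odd_prod_eval_T γ hmono (one_le_two.trans hk1) hk2 hone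
  simpa only [eval_prod, eval_pow] using integral_eq_zero_of_eval_eq_odd_comp_mul hγ hμconv hF
    (A := ∏ j ∈ Finset.Icc 1 n, T γ (sf j) ^ idx j) (natDegree_prod_T_lt γ hmono hidx hk2 hgap)
    fun x => by simp only [eval_prod, eval_pow, hfac]

theorem stmt_9 (γ : ℕ → ℝ) (hγ : ∀ s : ℕ, 0 < γ (s + 1) ∧ γ (s + 1) < 1 / 4)
    (μ : Measure ℝ) [IsProbabilityMeasure μ]
    (hμint : ∀ p : Polynomial ℝ, Integrable (fun x => p.eval x) μ)
    (hμpos : ∀ p : Polynomial ℝ, p ≠ 0 → 0 < ∫ x, (p.eval x) ^ 2 ∂μ)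
    (hμconv : ∀ p : Polynomial ℝ,
      Tendsto (fun s => nuInt γ s (fun x => p.eval x)) atTop (nhds (∫ x, p.eval x ∂μ)))
    (Q : ℕ → Polynomial ℝ) (hQmonic : ∀ n, (Q n).Monic) (hQdeg : ∀ n, (Q n).natDegree = n)
    (hQorth : ∀ n : ℕ, ∀ p : Polynomial ℝ, p.degree < (n : WithBot ℕ) →
      ∫ x, (Q n).eval x * p.eval x ∂μ = 0)
    (n : ℕ) (hn : 1 ≤ n) (sf idx : ℕ → ℕ)
    (hs1 : 0 < sf 1) (hsmono : ∀ k, 1 ≤ k → k < n → sf k < sf (k + 1))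
    (hidx : ∀ k, 1 ≤ k → k ≤ n → idx k = 1 ∨ idx k = 2)
    (k : ℕ) (hk1 : 2 ≤ k) (hk2 : k ≤ n) (hone : idx k = 1)
    (hgap : sf (k - 1) + 2 ≤ sf k) :
    ∫ x, ∏ j ∈ Finset.Icc 1 n, ((Q (2 ^ sf j)).eval x) ^ idx j ∂μ = 0 :=
  stmt_9_general γ hγ μ hμint hμpos hμconv Q hQmonic hQdeg hQorth n sf idx hsmono hidx k hk1 hk2
    hone hgap
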